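/- arXiv:2009.07212 — 7 statements merged into one kernel-verified Lean document; each statement's English description precedes it below -/
import Mathlib

section
/- Let X be a compact metric space and Γ : C(X) → ℝ a pressure function. Then for every φ ∈ C(X) the supremum of 𝔥(μ) + ∫ φ dμ over μ ∈ 𝒫(X) is attained and Γ(φ) = max_{μ ∈ 𝒫(X)} { 𝔥(μ) + ∫ φ dμ }. -/
/-!
Convexity of `Γ` alone gives, by Hahn–Banach applied to the (sublinear) one-sided directional
derivative of `Γ` at `φ`, a linear functional `L` with `L χ ≤ Γ (φ + χ) - Γ φ`. Monotonicity and
translation invariance make `L` positive and normalised, so by Riesz–Markov–Kakutani it is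
integration against a probability measure `μ`. Testing the definition of `𝔥` with
`Γ φ - φ` gives `𝔥 ν + ∫ φ dν ≤ Γ φ` for every `ν`, and the subgradient inequality shows that
every admissible test function has `μ`-integral at least `Γ φ - ∫ φ dμ`, so equality holds at `μ`.
-/

open MeasureTheory

/-- A pressure function on `C(X,ℝ)`: monotone, translation invariant and convex. -/
def IsPressureFunction {X : Type*} [TopologicalSpace X] [CompactSpace X]
    (Γ : C(X, ℝ) → ℝ) : Prop :=
  (∀ φ ψ : C(X, ℝ), (∀ x, φ x ≤ ψ x) → Γ φ ≤ Γ ψ) ∧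
  (∀ (φ : C(X, ℝ)) (c : ℝ), Γ (φ + ContinuousMap.const X c) = Γ φ + c) ∧
  ConvexOn ℝ Set.univ Γ

/-- The entropy-like map `𝔥(μ) = inf { ∫ φ dμ : φ ∈ C(X), Γ(−φ) ≤ 0 }`, valued in `EReal`
(so that the value `−∞` is allowed). -/
noncomputable def entropyLike {X : Type*} [TopologicalSpace X] [CompactSpace X]
    [MeasurableSpace X] (Γ : C(X, ℝ) → ℝ) (μ : ProbabilityMeasure X) : EReal :=
  sInf { r : EReal | ∃ φ : C(X, ℝ), Γ (-φ) ≤ 0 ∧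
    r = ((∫ x, φ x ∂(μ : Measure X) : ℝ) : EReal) }

open Set Filter Topology CompactlySupported

section DirectionalDerivative

variable {E : Type*} [AddCommGroup E] [Module ℝ E] {f : E → ℝ}

noncomputable def rightDirDeriv (f : E → ℝ) (x v : E) : ℝ :=
  derivWithin (fun t : ℝ => f (x + t • v)) (Ioi 0) 0

theorem ConvexOn.comp_line (hf : ConvexOn ℝ univ f) (x v : E) :
    ConvexOn ℝ univ (fun t : ℝ => f (x + t • v)) :=
  (hf.translate_right x).comp_linearMap (LinearMap.toSpanSingleton ℝ E v)

theorem ConvexOn.hasDerivWithinAt_rightDirDeriv (hf : ConvexOn ℝ univ f) (x v : E) :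
    HasDerivWithinAt (fun t : ℝ => f (x + t • v)) (rightDirDeriv f x v) (Ioi 0) 0 :=
  (hf.comp_line x v).hasDerivWithinAt_rightDeriv_of_mem_interior (by simp)

theorem ConvexOn.tendsto_rightDirDeriv (hf : ConvexOn ℝ univ f) (x v : E) :
    Tendsto (fun t : ℝ => (f (x + t • v) - f x) / t) (𝓝[>] 0) (𝓝 (rightDirDeriv f x v)) := by
  simpa [hasDerivWithinAt_iff_tendsto_slope, slope_fun_def_field] using
    hf.hasDerivWithinAt_rightDirDeriv x v

theorem ConvexOn.rightDirDeriv_le_slope (hf : ConvexOn ℝ univ f) (x v : E) {t : ℝ} (ht : 0 < t) :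
    rightDirDeriv f x v ≤ (f (x + t • v) - f x) / t := by
  have hline := hf.comp_line x v
  rw [rightDirDeriv, hline.rightDeriv_eq_sInf_slope_of_mem_interior (by simp)]
  refine csInf_le (bddBelow_slope_lt_of_mem_interior hline (by simp)) ⟨t, by simpa using ht, ?_⟩
  simp [slope_def_field]

theorem ConvexOn.rightDirDeriv_smul (hf : ConvexOn ℝ univ f) (x v : E) {c : ℝ} (hc : 0 < c) :
    rightDirDeriv f x (c • v) = c * rightDirDeriv f x v := by
  have hscale : HasDerivWithinAt (fun t : ℝ => t * c) c (Ioi 0) 0 := by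
    simpa using (hasDerivWithinAt_id (0 : ℝ) (Ioi 0)).mul_const c
  have hcomp := (hf.hasDerivWithinAt_rightDirDeriv x v).comp_of_eq 0 hscale
    (fun t ht => mul_pos ht hc) (zero_mul c).symm
  rw [rightDirDeriv, mul_comm, ← hcomp.derivWithin (uniqueDiffWithinAt_Ioi 0)]
  simp only [Function.comp_def, mul_smul]

theorem ConvexOn.rightDirDeriv_add_le (hf : ConvexOn ℝ univ f) (x v w : E) :
    rightDirDeriv f x (v + w) ≤ rightDirDeriv f x v + rightDirDeriv f x w := by
  have hlim := ((hf.tendsto_rightDirDeriv x ((2 : ℝ) • v)).add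
    (hf.tendsto_rightDirDeriv x ((2 : ℝ) • w))).div_const 2
  rw [hf.rightDirDeriv_smul x v two_pos, hf.rightDirDeriv_smul x w two_pos,
    ← mul_add, mul_div_cancel_left₀ _ two_ne_zero] at hlim
  refine ge_of_tendsto hlim (eventually_nhdsWithin_of_forall fun t (ht : 0 < t) => ?_)
  have hmid := hf.2 (mem_univ (x + t • (2 : ℝ) • v)) (mem_univ (x + t • (2 : ℝ) • w))
    (show (0 : ℝ) ≤ 1 / 2 by norm_num) (show (0 : ℝ) ≤ 1 / 2 by norm_num) (by norm_num)
  have hcomb : (1 / 2 : ℝ) • (x + t • (2 : ℝ) • v) + (1 / 2 : ℝ) • (x + t • (2 : ℝ) • w) =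
      x + t • (v + w) := by
    module
  rw [hcomb, smul_eq_mul, smul_eq_mul] at hmid
  calc rightDirDeriv f x (v + w) ≤ (f (x + t • (v + w)) - f x) / t :=
        hf.rightDirDeriv_le_slope x _ ht
    _ ≤ _ := by
      rw [← add_div, div_div, mul_comm t, ← div_div]
      gcongr
      linarith

theorem ConvexOn.exists_linearMap_le_sub (hf : ConvexOn ℝ univ f) (x : E) :
    ∃ L : E →ₗ[ℝ] ℝ, ∀ v, L v ≤ f (x + v) - f x := by
  obtain ⟨L, -, hL⟩ := exists_extension_of_le_sublinear (⊥ : E →ₗ.[ℝ] ℝ) (rightDirDeriv f x)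
    (fun c hc v => hf.rightDirDeriv_smul x v hc) (hf.rightDirDeriv_add_le x) (fun ⟨v, hv⟩ => by
      obtain rfl : v = 0 := (Submodule.mem_bot ℝ).1 hv
      exact ((⊥ : E →ₗ.[ℝ] ℝ).map_zero.trans (by simp [rightDirDeriv])).le)
  exact ⟨L, fun v => (hL v).trans (by simpa using hf.rightDirDeriv_le_slope x v one_pos)⟩

end DirectionalDerivative

namespace IsPressureFunction

variable {X : Type*} [TopologicalSpace X] [CompactSpace X] {Γ : C(X, ℝ) → ℝ}

theorem monotone_of_le_sub (hΓ : IsPressureFunction Γ) {φ : C(X, ℝ)} {L : C(X, ℝ) →ₗ[ℝ] ℝ}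
    (hL : ∀ χ, L χ ≤ Γ (φ + χ) - Γ φ) : Monotone L := by
  intro χ ψ hχψ
  have hmono : Γ (φ + (χ - ψ)) ≤ Γ φ := hΓ.1 _ _ fun x => by simpa using hχψ x
  linarith [hL (χ - ψ), map_sub L χ ψ]

theorem map_const_of_le_sub (hΓ : IsPressureFunction Γ) {φ : C(X, ℝ)} {L : C(X, ℝ) →ₗ[ℝ] ℝ}
    (hL : ∀ χ, L χ ≤ Γ (φ + χ) - Γ φ) (c : ℝ) : L (ContinuousMap.const X c) = c := by
  have hup := hL (ContinuousMap.const X c)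
  have hlow := hL (ContinuousMap.const X (-c))
  rw [hΓ.2.1] at hup hlow
  rw [show ContinuousMap.const X (-c) = -ContinuousMap.const X c from rfl, map_neg] at hlow
  linarith

end IsPressureFunction

theorem exists_isProbabilityMeasure_integral_eq {X : Type*} [TopologicalSpace X] [T2Space X]
    [CompactSpace X] [MeasurableSpace X] [BorelSpace X] (L : C(X, ℝ) →ₗ[ℝ] ℝ) (hL : Monotone L)
    (hL₁ : L 1 = 1) :
    ∃ μ : Measure X, IsProbabilityMeasure μ ∧ ∀ f : C(X, ℝ), ∫ x, f x ∂μ = L f := by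
  let Λ : C_c(X, ℝ) →ₚ[ℝ] ℝ :=
    { toFun f := L f.toContinuousMap
      map_add' f g := map_add L _ _
      map_smul' c f := map_smul L c _
      monotone' f g hfg := hL hfg }
  have hΛ (f : C(X, ℝ)) : ∫ x, f x ∂(RealRMK.rieszMeasure Λ) = L f :=
    RealRMK.integral_rieszMeasure Λ ⟨f, HasCompactSupport.of_compactSpace f⟩
  refine ⟨RealRMK.rieszMeasure Λ, ⟨?_⟩, hΛ⟩
  have hmass := hΛ 1
  simp only [ContinuousMap.one_apply, integral_const, smul_eq_mul, mul_one, hL₁] at hmass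
  exact (ENNReal.toReal_eq_one_iff _).1 hmass

theorem ContinuousMap.integrable_of_compactSpace {X : Type*} [TopologicalSpace X]
    [CompactSpace X] [MeasurableSpace X] [OpensMeasurableSpace X] {μ : Measure X}
    [IsFiniteMeasure μ] (f : C(X, ℝ)) : Integrable f μ :=
  f.continuous.integrable_of_hasCompactSupport (.of_compactSpace f)

section Entropy

variable {X : Type*} [TopologicalSpace X] [CompactSpace X] [MeasurableSpace X] [BorelSpace X]
  {Γ : C(X, ℝ) → ℝ}

theorem IsPressureFunction.entropyLike_add_integral_le (hΓ : IsPressureFunction Γ)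
    (φ : C(X, ℝ)) (ν : ProbabilityMeasure X) :
    entropyLike Γ ν + ((∫ x, φ x ∂(ν : Measure X) : ℝ) : EReal) ≤ (Γ φ : EReal) := by
  have htest : entropyLike Γ ν ≤ ((Γ φ - ∫ x, φ x ∂(ν : Measure X) : ℝ) : EReal) := by
    refine sInf_le ⟨ContinuousMap.const X (Γ φ) - φ, ?_, ?_⟩
    · have hneg : -(ContinuousMap.const X (Γ φ) - φ) = φ + ContinuousMap.const X (-Γ φ) := by
        ext; simp; ring
      rw [hneg, hΓ.2.1]
      simp
    · simp only [ContinuousMap.sub_apply, ContinuousMap.const_apply]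
      rw [integral_sub (integrable_const _) (ContinuousMap.integrable_of_compactSpace φ)]
      simp
  calc _ ≤ ((Γ φ - ∫ x, φ x ∂(ν : Measure X) : ℝ) : EReal) +
        ((∫ x, φ x ∂(ν : Measure X) : ℝ) : EReal) := add_le_add_left htest _
    _ = Γ φ := by rw [← EReal.coe_add, sub_add_cancel]

theorem le_entropyLike_add_integral {φ : C(X, ℝ)} {μ : ProbabilityMeasure X}
    (hμ : ∀ χ : C(X, ℝ), ∫ x, χ x ∂(μ : Measure X) ≤ Γ (φ + χ) - Γ φ) :
    (Γ φ : EReal) ≤ entropyLike Γ μ + ((∫ x, φ x ∂(μ : Measure X) : ℝ) : EReal) := by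
  have hbound : ((Γ φ - ∫ x, φ x ∂(μ : Measure X) : ℝ) : EReal) ≤ entropyLike Γ μ := by
    refine le_sInf ?_
    rintro _ ⟨ψ, hψ, rfl⟩
    have h := hμ (-ψ - φ)
    simp only [add_sub_cancel, ContinuousMap.sub_apply, ContinuousMap.neg_apply] at h
    rw [integral_sub (f := fun x => -ψ x) (ContinuousMap.integrable_of_compactSpace ψ).neg
        (ContinuousMap.integrable_of_compactSpace φ), integral_neg] at h
    exact EReal.coe_le_coe_iff.2 (by linarith)
  calc (Γ φ : EReal) = ((Γ φ - ∫ x, φ x ∂(μ : Measure X) : ℝ) : EReal) +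
        ((∫ x, φ x ∂(μ : Measure X) : ℝ) : EReal) := by rw [← EReal.coe_add, sub_add_cancel]
    _ ≤ _ := add_le_add_left hbound _

end Entropy

theorem pressure_variational_principle_general {X : Type*} [MetricSpace X] [CompactSpace X]
    [MeasurableSpace X] [BorelSpace X]
    (Γ : C(X, ℝ) → ℝ) (hΓ : IsPressureFunction Γ) (φ : C(X, ℝ)) :
    ∃ μ : ProbabilityMeasure X,
      entropyLike Γ μ + ((∫ x, φ x ∂(μ : Measure X) : ℝ) : EReal) = (Γ φ : EReal) ∧
      ∀ ν : ProbabilityMeasure X,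
        entropyLike Γ ν + ((∫ x, φ x ∂(ν : Measure X) : ℝ) : EReal) ≤ (Γ φ : EReal) := by
  obtain ⟨L, hL⟩ := hΓ.2.2.exists_linearMap_le_sub φ
  obtain ⟨μ, hμ, hμL⟩ := exists_isProbabilityMeasure_integral_eq L (hΓ.monotone_of_le_sub hL)
    (hΓ.map_const_of_le_sub hL 1)
  have hsub (χ : C(X, ℝ)) : ∫ x, χ x ∂μ ≤ Γ (φ + χ) - Γ φ := (hμL χ).symm ▸ hL χ
  exact ⟨⟨μ, hμ⟩,
    le_antisymm (hΓ.entropyLike_add_integral_le φ _) (le_entropyLike_add_integral hsub),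
    hΓ.entropyLike_add_integral_le φ⟩

/-- Variational principle: for every pressure function `Γ` and every
`φ ∈ C(X)`, the supremum of `𝔥(μ) + ∫ φ dμ` over Borel probability measures is attained
and equals `Γ(φ)`. -/
theorem pressure_variational_principle {X : Type*} [MetricSpace X] [CompactSpace X]
    [Nonempty X] [MeasurableSpace X] [BorelSpace X]
    (Γ : C(X, ℝ) → ℝ) (hΓ : IsPressureFunction Γ) (φ : C(X, ℝ)) :
    ∃ μ : ProbabilityMeasure X,
      entropyLike Γ μ + ((∫ x, φ x ∂(μ : Measure X) : ℝ) : EReal) = (Γ φ : EReal) ∧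
      ∀ ν : ProbabilityMeasure X,
        entropyLike Γ ν + ((∫ x, φ x ∂(ν : Measure X) : ℝ) : EReal) ≤ (Γ φ : EReal) :=
  pressure_variational_principle_general Γ hΓ φ
end

section
/- Let X be a compact metric space and Γ : C(X) → ℝ a pressure function. If α : 𝒫(X) → ℝ ∪ {−∞, +∞} is any function satisfying Γ(φ) = sup_{μ ∈ 𝒫(X)} { α(μ) + ∫ φ dμ } for every φ ∈ C(X), then α(μ) ≤ 𝔥(μ) for every μ ∈ 𝒫(X). -/
open MeasureTheory

/-- Maximality of the entropy-like map: any `α : 𝒫(X) → ℝ ∪ {−∞,+∞}`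
satisfying the variational identity `Γ(φ) = sup_μ { α(μ) + ∫ φ dμ }` for all `φ ∈ C(X)`
is dominated by `𝔥`. -/
theorem entropyLike_maximal {X : Type*} [MetricSpace X] [CompactSpace X] [Nonempty X]
    [MeasurableSpace X] [BorelSpace X]
    (Γ : C(X, ℝ) → ℝ) (hΓ : IsPressureFunction Γ)
    (α : ProbabilityMeasure X → EReal)
    (hα : ∀ φ : C(X, ℝ), (Γ φ : EReal) =
      ⨆ μ : ProbabilityMeasure X, α μ + ((∫ x, φ x ∂(μ : Measure X) : ℝ) : EReal)) :
    ∀ μ : ProbabilityMeasure X, α μ ≤ entropyLike Γ μ := by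
  intro μ
  apply le_sInf
  rintro r ⟨φ, hφ, rfl⟩
  set I : ℝ := ∫ x, φ x ∂(μ : Measure X) with hI
  -- From the variational identity at -φ:
  have key : α μ + ((-I : ℝ) : EReal) ≤ ((Γ (-φ) : ℝ) : EReal) := by
    rw [hα (-φ)]
    have hint : (∫ x, (-φ) x ∂(μ : Measure X) : ℝ) = -I := by
      simp [hI, integral_neg]
    calc α μ + ((-I : ℝ) : EReal)
        = α μ + ((∫ x, (-φ) x ∂(μ : Measure X) : ℝ) : EReal) := by rw [hint]
      _ ≤ _ := le_iSup (fun ν : ProbabilityMeasure X =>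
            α ν + ((∫ x, (-φ) x ∂(ν : Measure X) : ℝ) : EReal)) μ
  have hle0 : α μ + ((-I : ℝ) : EReal) ≤ 0 := by
    refine key.trans ?_
    exact_mod_cast hφ
  rw [show ((I:ℝ):EReal) = ((∫ x, φ x ∂(μ : Measure X) : ℝ) : EReal) from rfl] at *
  generalize hA : α μ = A at hle0 ⊢
  induction A using EReal.rec with
  | bot => exact bot_le
  | coe a =>
    have : ((a - I : ℝ) : EReal) ≤ ((0 : ℝ) : EReal) := by
      rw [show ((a - I : ℝ) : EReal) = (a : EReal) + ((-I : ℝ) : EReal) by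
        norm_cast]
      simpa using hle0
    have : a - I ≤ 0 := by exact_mod_cast this
    exact_mod_cast (by linarith : a ≤ I)
  | top =>
    exfalso
    have : (⊤ : EReal) + ((-I : ℝ) : EReal) = ⊤ := EReal.top_add_coe _
    rw [this] at hle0
    exact absurd hle0 (by simp)
end

section
/- Let X be a compact metric space and Γ : C(X) → ℝ a pressure function. Then the entropy-like map satisfies the Legendre–Fenchel duality formula 𝔥(μ) = inf_{φ ∈ C(X)} { Γ(φ) − ∫ φ dμ } for every μ ∈ 𝒫(X). -/
open MeasureTheory

/-- Legendre–Fenchel duality formula: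
`𝔥(μ) = inf_{φ ∈ C(X)} { Γ(φ) − ∫ φ dμ }` for every Borel probability measure `μ`. -/
theorem entropyLike_legendre_fenchel {X : Type*} [MetricSpace X] [CompactSpace X]
    [MeasurableSpace X] [BorelSpace X]
    (Γ : C(X, ℝ) → ℝ) (hΓ : IsPressureFunction Γ) (μ : ProbabilityMeasure X) :
    entropyLike Γ μ =
      ⨅ φ : C(X, ℝ), ((Γ φ - ∫ x, φ x ∂(μ : Measure X) : ℝ) : EReal) := by
  obtain ⟨hmono, htrans, hconv⟩ := hΓ
  have hint : ∀ φ : C(X, ℝ), Integrable (fun x => φ x) (μ : Measure X) := fun φ =>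
    (map_continuous φ).integrable_of_hasCompactSupport (HasCompactSupport.of_compactSpace _)
  unfold entropyLike
  apply le_antisymm
  · apply le_iInf
    intro φ
    apply sInf_le
    refine ⟨-φ + ContinuousMap.const X (Γ φ), ?_, ?_⟩
    · have h1 : -(-φ + ContinuousMap.const X (Γ φ)) = φ + ContinuousMap.const X (-(Γ φ)) := by
        ext x; simp; ring
      rw [h1, htrans]; linarith
    · have : ∫ x, (-φ + ContinuousMap.const X (Γ φ)) x ∂(μ : Measure X)
          = Γ φ - ∫ x, φ x ∂(μ : Measure X) := by
        simp only [ContinuousMap.add_apply, ContinuousMap.neg_apply, ContinuousMap.const_apply]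
        rw [show (fun x => -φ x + Γ φ) = (fun x => (fun x => -φ x) x + (fun _ => Γ φ) x) from rfl]
        rw [integral_add ((hint φ).neg') (integrable_const _), integral_neg, integral_const]
        simp [measure_univ]
        ring
      rw [this]
  · apply le_sInf
    rintro r ⟨ψ, hψ, rfl⟩
    refine iInf_le_of_le (-ψ) ?_
    have h2 : ∫ x, (-ψ : C(X,ℝ)) x ∂(μ : Measure X) = -∫ x, ψ x ∂(μ : Measure X) := by
      simp only [ContinuousMap.neg_apply]; rw [integral_neg]
    rw [h2, EReal.coe_le_coe_iff]
    linarith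
end

section
/- Let X be a compact metric space, Γ : C(X) → ℝ a pressure function, and φ ∈ C(X). Set B_Γ = { ψ ∈ C(X) : Γ(−ψ) < 0 }. Suppose L : C(X) → ℝ is a nonzero continuous linear functional satisfying L(−φ) ≤ L(χ) for every χ ∈ B_Γ. Then L is positive (L(ψ) ≥ 0 whenever ψ ≥ 0 pointwise) and L(1) > 0, where 1 is the constant function equal to one. -/
open MeasureTheory

/-- If a nonzero continuous linear functional `L` on `C(X)` satisfies
`L(−φ) ≤ L(χ)` for every `χ` with `Γ(−χ) < 0`, then `L` is positive and `L(1) > 0`. -/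
theorem separating_functional_positive {X : Type*} [MetricSpace X] [CompactSpace X]
    (Γ : C(X, ℝ) → ℝ) (hΓ : IsPressureFunction Γ) (φ : C(X, ℝ))
    (L : C(X, ℝ) →L[ℝ] ℝ) (hL : L ≠ 0)
    (hsep : ∀ χ : C(X, ℝ), Γ (-χ) < 0 → L (-φ) ≤ L χ) :
    (∀ ψ : C(X, ℝ), (∀ x, 0 ≤ ψ x) → 0 ≤ L ψ) ∧ 0 < L 1 := by
  obtain ⟨hmono, htrans, _⟩ := hΓ
  set c : ℝ := Γ 0 + 1 with hc
  have hχ0 : Γ (-(ContinuousMap.const X c)) < 0 := by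
    have he : -(ContinuousMap.const X c) = 0 + ContinuousMap.const X (-c) := by
      ext x; simp
    rw [he, htrans]
    simp [hc]
  have hpos : ∀ ψ : C(X, ℝ), (∀ x, 0 ≤ ψ x) → 0 ≤ L ψ := by
    intro ψ hψ
    by_contra h
    push_neg at h
    have key : ∀ t : ℝ, 0 ≤ t →
        L (-φ) ≤ L (ContinuousMap.const X c) + t * L ψ := by
      intro t ht
      have hB : Γ (-(ContinuousMap.const X c + t • ψ)) < 0 := by
        refine lt_of_le_of_lt (hmono _ _ ?_) hχ0
        intro x
        simp only [ContinuousMap.neg_apply, ContinuousMap.add_apply,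
          ContinuousMap.smul_apply, ContinuousMap.const_apply, smul_eq_mul]
        nlinarith [hψ x]
      have := hsep _ hB
      simpa [map_add, L.map_smul, smul_eq_mul] using this
    set t : ℝ := max ((L (-φ) - L (ContinuousMap.const X c) - 1) / L ψ) 0 with htdef
    have ht0 : 0 ≤ t := le_max_right _ _
    have hkey := key t ht0
    have hle : (L (-φ) - L (ContinuousMap.const X c) - 1) / L ψ ≤ t := le_max_left _ _
    have h1 : t * L ψ ≤ L (-φ) - L (ContinuousMap.const X c) - 1 := by
      have h2 : t * L ψ ≤ ((L (-φ) - L (ContinuousMap.const X c) - 1) / L ψ) * L ψ := by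
        nlinarith
      rw [div_mul_cancel₀ _ (ne_of_lt h)] at h2
      exact h2
    linarith
  refine ⟨hpos, ?_⟩
  have h10 : 0 ≤ L 1 := hpos 1 (by intro x; simp)
  rcases lt_or_eq_of_le h10 with h | h
  · exact h
  · exfalso
    apply hL
    ext ψ
    have hub : L ψ ≤ 0 := by
      have := hpos (‖ψ‖ • (1 : C(X, ℝ)) - ψ) (by
        intro x
        simp only [ContinuousMap.sub_apply, ContinuousMap.smul_apply,
          ContinuousMap.one_apply, smul_eq_mul, mul_one]
        have := ψ.norm_coe_le_norm x
        have := abs_le.mp this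
        linarith [this.2])
      simp only [map_sub, L.map_smul, smul_eq_mul] at this
      rw [← h] at this
      linarith
    have hlb : 0 ≤ L ψ := by
      have := hpos (‖ψ‖ • (1 : C(X, ℝ)) + ψ) (by
        intro x
        simp only [ContinuousMap.add_apply, ContinuousMap.smul_apply,
          ContinuousMap.one_apply, smul_eq_mul, mul_one]
        have := abs_le.mp (ψ.norm_coe_le_norm x)
        linarith [this.1])
      simp only [map_add, L.map_smul, smul_eq_mul] at this
      rw [← h] at this
      linarith
    simp
    linarith
end

section
/- Let X be a compact metric space and Γ : C(X) → ℝ a pressure function. Then for every φ ∈ C(X), the set of equilibrium states of φ coincides with the set of tangent functionals to Γ at φ: ℰ_φ(Γ) = 𝒯_φ(Γ). -/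
open MeasureTheory

lemma cm_integrable {X : Type*} [MetricSpace X] [CompactSpace X]
    [MeasurableSpace X] [BorelSpace X] (μ : ProbabilityMeasure X) (f : C(X, ℝ)) :
    Integrable (fun x => f x) (μ : Measure X) :=
  (BoundedContinuousFunction.mkOfCompact f).integrable _

lemma ereal_add_eq (s : EReal) (r q : ℝ) :
    s + (r : EReal) = (q : EReal) ↔ s = ((q - r : ℝ) : EReal) := by
  constructor
  · intro H
    have H2 : s + (r : EReal) + ((-r : ℝ) : EReal) = (q : EReal) + ((-r : ℝ) : EReal) := by
      rw [H]
    rwa [add_assoc, ← EReal.coe_add, add_neg_cancel, EReal.coe_zero, add_zero,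
      ← EReal.coe_add, show q + -r = q - r from by ring] at H2
  · intro H
    rw [H, ← EReal.coe_add]
    norm_num

/-- For every `φ ∈ C(X)`, the set of equilibrium states of `φ`
(probability measures attaining `Γ(φ) = 𝔥(μ) + ∫ φ dμ`) coincides with the set of
tangent functionals to `Γ` at `φ`. -/
theorem equilibrium_eq_tangent {X : Type*} [MetricSpace X] [CompactSpace X]
    [MeasurableSpace X] [BorelSpace X]
    (Γ : C(X, ℝ) → ℝ) (hΓ : IsPressureFunction Γ) (φ : C(X, ℝ)) :
    { μ : ProbabilityMeasure X |
        entropyLike Γ μ + ((∫ x, φ x ∂(μ : Measure X) : ℝ) : EReal) = (Γ φ : EReal) } =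
    { μ : ProbabilityMeasure X |
        ∀ ψ : C(X, ℝ), ∫ x, ψ x ∂(μ : Measure X) ≤ Γ (φ + ψ) - Γ φ } := by
  obtain ⟨hmono, htrans, hconv⟩ := hΓ
  ext μ
  simp only [Set.mem_setOf_eq]
  set I : C(X, ℝ) → ℝ := fun ψ => ∫ x, ψ x ∂(μ : Measure X) with hI
  -- linearity of I
  have hIadd : ∀ f g : C(X, ℝ), I (f + g) = I f + I g := by
    intro f g
    simp only [hI, ContinuousMap.add_apply]
    exact integral_add (cm_integrable μ f) (cm_integrable μ g)
  have hIneg : ∀ f : C(X, ℝ), I (-f) = -I f := by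
    intro f
    simp only [hI, ContinuousMap.neg_apply]
    exact integral_neg _
  have hIconst : ∀ c : ℝ, I (ContinuousMap.const X c) = c := by
    intro c
    simp [hI]
  rw [ereal_add_eq]
  set c : ℝ := Γ φ - I φ with hc
  set S : Set EReal := { r : EReal | ∃ χ : C(X, ℝ), Γ (-χ) ≤ 0 ∧
    r = ((∫ x, χ x ∂(μ : Measure X) : ℝ) : EReal) } with hS
  have hcmem : (c : EReal) ∈ S := by
    refine ⟨-φ + ContinuousMap.const X (Γ φ), ?_, ?_⟩
    · have h1 : -(-φ + ContinuousMap.const X (Γ φ)) = φ + ContinuousMap.const X (-Γ φ) := by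
        ext x; simp; ring
      rw [h1, htrans]
      linarith
    · have : I (-φ + ContinuousMap.const X (Γ φ)) = c := by
        rw [hIadd, hIneg, hIconst, hc]; ring
      rw [← this]
  constructor
  · -- equilibrium ⇒ tangent
    intro H ψ
    have hχ : Γ (-(-(φ + ψ) + ContinuousMap.const X (Γ (φ + ψ)))) ≤ 0 := by
      have h1 : -(-(φ + ψ) + ContinuousMap.const X (Γ (φ + ψ)))
          = (φ + ψ) + ContinuousMap.const X (-Γ (φ + ψ)) := by
        ext x; simp; ring
      rw [h1, htrans]
      linarith
    have hmem : ((I (-(φ + ψ) + ContinuousMap.const X (Γ (φ + ψ))) : ℝ) : EReal) ∈ S :=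
      ⟨_, hχ, rfl⟩
    have hle : (c : EReal) ≤ ((I (-(φ + ψ) + ContinuousMap.const X (Γ (φ + ψ))) : ℝ) : EReal) := by
      rw [show (c : EReal) = entropyLike Γ μ from H.symm]
      exact sInf_le hmem
    have hle' : c ≤ I (-(φ + ψ) + ContinuousMap.const X (Γ (φ + ψ))) :=
      EReal.coe_le_coe_iff.mp hle
    have hval : I (-(φ + ψ) + ContinuousMap.const X (Γ (φ + ψ)))
        = -(I φ + I ψ) + Γ (φ + ψ) := by
      rw [hIadd, hIneg, hIadd, hIconst]
    rw [hval, hc] at hle'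
    linarith
  · -- tangent ⇒ equilibrium
    intro hT
    refine le_antisymm (sInf_le hcmem) (le_sInf ?_)
    rintro r ⟨χ, hχ, rfl⟩
    rw [EReal.coe_le_coe_iff]
    have h1 : φ + (-χ + -φ) = -χ := by ext x; simp
    have h2 := hT (-χ + -φ)
    rw [h1] at h2
    have h3 : I (-χ + -φ) = -I χ - I φ := by
      rw [hIadd, hIneg, hIneg]; ring
    have h2' : I (-χ + -φ) ≤ Γ (-χ) - Γ φ := h2
    rw [h3] at h2'
    show c ≤ I χ
    rw [hc]
    linarith
end

section
/- Let f : X → X be a continuous transformation of a compact metric space X with h_top(f) < +∞. Then a Borel probability measure μ ∈ 𝒫(X) is f-invariant if and only if 𝔥_μ(f) ≥ 0. -/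
open MeasureTheory Filter Topology

/-- `dynPn f φ n ε` is the supremum, over all `(n,ε)`-separated finite subsets `E` of
`X`, of `∑_{x ∈ E} exp (Sₙφ(x))`, where `Sₙφ(x) = ∑_{j=0}^{n} φ(f^j x)` and `E` is
`(n,ε)`-separated when any two distinct points of `E` are `ε`-apart in some iterate
`f^j`, `0 ≤ j ≤ n`. -/
noncomputable def dynPn {X : Type*} [MetricSpace X] (f : X → X) (φ : C(X, ℝ))
    (n : ℕ) (ε : ℝ) : ℝ :=
  sSup { r : ℝ | ∃ E : Finset X,
    (∀ x ∈ E, ∀ z ∈ E, x ≠ z → ∃ j ≤ n, ε ≤ dist (f^[j] x) (f^[j] z)) ∧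
    r = ∑ x ∈ E, Real.exp (∑ j ∈ Finset.range (n + 1), φ (f^[j] x)) }

/-- The topological pressure `P_top(f,φ)`, as the limit as `ε → 0⁺` (equivalently, by
monotonicity in `ε`, the supremum over `ε > 0`) of `limsup_n (1/n) log dynPn f φ n ε`,
valued in `EReal`. -/
noncomputable def Ptop {X : Type*} [MetricSpace X] (f : X → X) (φ : C(X, ℝ)) : EReal :=
  ⨆ ε : { e : ℝ // 0 < e },
    Filter.atTop.limsup (fun n : ℕ => ((Real.log (dynPn f φ n (ε : ℝ)) / n : ℝ) : EReal))

/-- The entropy-like map `𝔥_μ(f) = inf_{φ ∈ C(X)} { P_top(f,φ) − ∫ φ dμ }`. -/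
noncomputable def dynEnt {X : Type*} [MetricSpace X] [MeasurableSpace X]
    (f : X → X) (μ : ProbabilityMeasure X) : EReal :=
  ⨅ φ : C(X, ℝ), (Ptop f φ - ((∫ x, φ x ∂(μ : Measure X) : ℝ) : EReal))

section aux

open ENNReal NNReal

variable {X : Type*} [MetricSpace X] [CompactSpace X]

private lemma sep_card_bound (f : X → X) (n : ℕ) {ε : ℝ} (hε : 0 < ε) :
    ∃ N : ℕ, ∀ E : Finset X,
      (∀ x ∈ E, ∀ z ∈ E, x ≠ z → ∃ j ≤ n, ε ≤ dist (f^[j] x) (f^[j] z)) →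
      E.card ≤ N := by
  set F : X → (Fin (n + 1) → X) := fun x j => f^[(j : ℕ)] x with hF
  have htb : TotallyBounded (Set.univ : Set (Fin (n + 1) → X)) :=
    isCompact_univ.totallyBounded
  obtain ⟨t, htfin, htcov⟩ := Metric.totallyBounded_iff.1 htb (ε / 2) (half_pos hε)
  classical
  refine ⟨htfin.toFinset.card, fun E hE => ?_⟩
  have hmem : ∀ x : X, ∃ y ∈ t, F x ∈ Metric.ball y (ε / 2) := by
    intro x
    have := htcov (Set.mem_univ (F x))
    simpa using this
  set c : X → (Fin (n + 1) → X) := fun x => (hmem x).choose with hc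
  have hct : ∀ x, c x ∈ t := fun x => (hmem x).choose_spec.1
  have hcd : ∀ x, dist (F x) (c x) < ε / 2 := fun x => (hmem x).choose_spec.2
  refine Finset.card_le_card_of_injOn c (fun x _ => htfin.mem_toFinset.2 (hct x)) ?_
  intro x hx z hz hxz
  by_contra hne
  obtain ⟨j, hj, hjd⟩ := hE x hx z hz hne
  have h1 : dist (f^[j] x) (f^[j] z) ≤ dist (F x) (F z) := by
    have := dist_le_pi_dist (F x) (F z) ⟨j, Nat.lt_succ_of_le hj⟩
    simpa [hF] using this
  have h2 : dist (F x) (F z) < ε := by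
    calc dist (F x) (F z) ≤ dist (F x) (c x) + dist (c x) (F z) := dist_triangle _ _ _
    _ < ε / 2 + ε / 2 := by
        refine add_lt_add (hcd x) ?_
        rw [hxz, dist_comm]; exact hcd z
    _ = ε := by ring
  linarith [hjd.trans h1]

private lemma dynPn_bddAbove (f : X → X) (φ : C(X, ℝ)) (n : ℕ) {ε : ℝ} (hε : 0 < ε) :
    BddAbove { r : ℝ | ∃ E : Finset X,
      (∀ x ∈ E, ∀ z ∈ E, x ≠ z → ∃ j ≤ n, ε ≤ dist (f^[j] x) (f^[j] z)) ∧
      r = ∑ x ∈ E, Real.exp (∑ j ∈ Finset.range (n + 1), φ (f^[j] x)) } := by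
  obtain ⟨N, hN⟩ := sep_card_bound f n hε
  refine ⟨N * Real.exp ((n + 1) * ‖φ‖), fun r hr => ?_⟩
  obtain ⟨E, hsep, rfl⟩ := hr
  calc ∑ x ∈ E, Real.exp (∑ j ∈ Finset.range (n + 1), φ (f^[j] x))
      ≤ ∑ _x ∈ E, Real.exp ((n + 1) * ‖φ‖) := by
        refine Finset.sum_le_sum fun x _ => Real.exp_le_exp.2 ?_
        calc ∑ j ∈ Finset.range (n + 1), φ (f^[j] x)
            ≤ ∑ _j ∈ Finset.range (n + 1), ‖φ‖ :=
              Finset.sum_le_sum fun j _ =>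
                (le_abs_self _).trans (φ.norm_coe_le_norm _)
          _ = (n + 1) * ‖φ‖ := by simp [mul_comm]
    _ = E.card * Real.exp ((n + 1) * ‖φ‖) := by
        rw [Finset.sum_const, nsmul_eq_mul]
    _ ≤ N * Real.exp ((n + 1) * ‖φ‖) := by
        exact mul_le_mul_of_nonneg_right (by exact_mod_cast hN E hsep)
          (Real.exp_nonneg _)

private lemma exp_le_dynPn (f : X → X) (φ : C(X, ℝ)) (n : ℕ) {ε : ℝ} (hε : 0 < ε) (x : X) :
    Real.exp (∑ j ∈ Finset.range (n + 1), φ (f^[j] x)) ≤ dynPn f φ n ε := by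
  refine le_csSup (dynPn_bddAbove f φ n hε) ⟨{x}, ?_, ?_⟩
  · intro a ha b hb hab
    simp only [Finset.mem_singleton] at ha hb
    exact absurd (ha.trans hb.symm) hab
  · simp

private lemma dynPn_pos [Nonempty X] (f : X → X) (φ : C(X, ℝ)) (n : ℕ) {ε : ℝ} (hε : 0 < ε) :
    0 < dynPn f φ n ε :=
  lt_of_lt_of_le (Real.exp_pos _) (exp_le_dynPn f φ n hε (Classical.arbitrary X))

private lemma one_le_dynPn_zero [Nonempty X] (f : X → X) (n : ℕ) {ε : ℝ} (hε : 0 < ε) :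
    1 ≤ dynPn f 0 n ε := by
  have := exp_le_dynPn f 0 n hε (Classical.arbitrary X)
  simpa using this

private lemma card_le_dynPn_zero (f : X → X) (n : ℕ) {ε : ℝ} (hε : 0 < ε) (E : Finset X)
    (hsep : ∀ x ∈ E, ∀ z ∈ E, x ≠ z → ∃ j ≤ n, ε ≤ dist (f^[j] x) (f^[j] z)) :
    (E.card : ℝ) ≤ dynPn f 0 n ε := by
  refine le_csSup (dynPn_bddAbove f 0 n hε) ⟨E, hsep, ?_⟩
  simp

/-- A lower bound criterion for `Ptop`. -/
private lemma le_Ptop [Nonempty X] (f : X → X) (φ : C(X, ℝ)) {b : ℝ}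
    (hb : ∀ n : ℕ, ∃ x : X, (n + 1) * b ≤ ∑ j ∈ Finset.range (n + 1), φ (f^[j] x)) :
    (b : EReal) ≤ Ptop f φ := by
  have hdyn : ∀ n : ℕ, (n + 1) * b ≤ Real.log (dynPn f φ n 1) := by
    intro n
    obtain ⟨x, hx⟩ := hb n
    have h1 : Real.exp ((n + 1) * b) ≤ dynPn f φ n 1 :=
      (Real.exp_le_exp.2 hx).trans (exp_le_dynPn f φ n one_pos x)
    have := Real.log_le_log (Real.exp_pos _) h1
    simpa [Real.log_exp] using this
  set u : ℕ → EReal := fun n => ((Real.log (dynPn f φ n 1) / n : ℝ) : EReal) with hu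
  have hvt : Tendsto (fun n : ℕ => (((n + 1) * b / n : ℝ) : EReal)) atTop (𝓝 (b : EReal)) := by
    have hreal : Tendsto (fun n : ℕ => ((n + 1) * b / n : ℝ)) atTop (𝓝 b) := by
      have h2 : Tendsto (fun n : ℕ => b + b / n) atTop (𝓝 (b + 0)) :=
        tendsto_const_nhds.add (tendsto_const_div_atTop_nhds_zero_nat b)
      rw [add_zero] at h2
      refine h2.congr' ?_
      filter_upwards [eventually_ge_atTop 1] with n hn
      have hn0 : (n : ℝ) ≠ 0 := Nat.cast_ne_zero.2 (by omega)
      field_simp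
    exact (continuous_coe_real_ereal.tendsto b).comp hreal
  have hlim : Filter.atTop.limsup (fun n : ℕ => (((n + 1) * b / n : ℝ) : EReal)) = (b : EReal) :=
    hvt.limsup_eq
  have hle : (b : EReal) ≤ Filter.atTop.limsup u := by
    rw [← hlim]
    refine limsup_le_limsup ?_
    filter_upwards [eventually_ge_atTop 1] with n hn
    have hn0 : (0 : ℝ) < n := by exact_mod_cast Nat.pos_of_ne_zero (by omega)
    have : (n + 1) * b / n ≤ Real.log (dynPn f φ n 1) / n := by
      gcongr
      exact hdyn n
    exact EReal.coe_le_coe_iff.2 this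
  exact hle.trans (le_iSup (fun ε : { e : ℝ // 0 < e } =>
    Filter.atTop.limsup (fun n : ℕ => ((Real.log (dynPn f φ n (ε : ℝ)) / n : ℝ) : EReal)))
    ⟨1, one_pos⟩)

private lemma Ptop_zero_nonneg [Nonempty X] (f : X → X) : (0 : EReal) ≤ Ptop f 0 := by
  have := le_Ptop (b := 0) f 0 (fun n => ⟨Classical.arbitrary X, by simp⟩)
  simpa using this

/-- Telescoping: the pressure of a coboundary-type function is at most that of `0`. -/
private lemma Ptop_cobound_le [Nonempty X] {f : X → X} (hf : Continuous f) (c : ℝ)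
    (φ : C(X, ℝ)) :
    Ptop f (c • (φ.comp ⟨f, hf⟩ - φ)) ≤ Ptop f 0 := by
  set ψ : C(X, ℝ) := c • (φ.comp ⟨f, hf⟩ - φ) with hψ
  set K : ℝ := 2 * |c| * ‖φ‖ with hK
  have htel : ∀ (n : ℕ) (x : X),
      ∑ j ∈ Finset.range (n + 1), ψ (f^[j] x) = c * φ (f^[n + 1] x) - c * φ x := by
    intro n x
    have h1 : ∀ j : ℕ, ψ (f^[j] x) = c * φ (f^[j + 1] x) - c * φ (f^[j] x) := by
      intro j
      simp [hψ, Function.iterate_succ_apply', mul_sub]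
    rw [Finset.sum_congr rfl (fun j _ => h1 j),
      Finset.sum_range_sub (fun j => c * φ (f^[j] x))]
    simp
  have hKb : ∀ (n : ℕ) (x : X), ∑ j ∈ Finset.range (n + 1), ψ (f^[j] x) ≤ K := by
    intro n x
    rw [htel n x]
    calc c * φ (f^[n + 1] x) - c * φ x ≤ |c * φ (f^[n + 1] x) - c * φ x| := le_abs_self _
      _ ≤ |c * φ (f^[n + 1] x)| + |c * φ x| := abs_sub _ _
      _ = |c| * |φ (f^[n + 1] x)| + |c| * |φ x| := by rw [abs_mul, abs_mul]
      _ ≤ |c| * ‖φ‖ + |c| * ‖φ‖ := by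
          gcongr
          · exact φ.norm_coe_le_norm _
          · exact φ.norm_coe_le_norm _
      _ = K := by ring
  have hdyn : ∀ (n : ℕ) (ε : ℝ), 0 < ε →
      dynPn f ψ n ε ≤ Real.exp K * dynPn f 0 n ε := by
    intro n ε hε
    refine csSup_le ⟨_, ⟨{Classical.arbitrary X}, ?_, rfl⟩⟩ ?_
    · intro a ha b hb hab
      simp only [Finset.mem_singleton] at ha hb
      exact absurd (ha.trans hb.symm) hab
    · rintro r ⟨E, hsep, rfl⟩
      calc ∑ x ∈ E, Real.exp (∑ j ∈ Finset.range (n + 1), ψ (f^[j] x))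
          ≤ ∑ _x ∈ E, Real.exp K :=
            Finset.sum_le_sum fun x _ => Real.exp_le_exp.2 (hKb n x)
        _ = E.card * Real.exp K := by rw [Finset.sum_const, nsmul_eq_mul]
        _ ≤ dynPn f 0 n ε * Real.exp K := by
            exact mul_le_mul_of_nonneg_right (card_le_dynPn_zero f n hε E hsep)
              (Real.exp_nonneg _)
        _ = Real.exp K * dynPn f 0 n ε := mul_comm _ _
  refine iSup_mono fun ε => ?_
  obtain ⟨ε, hε⟩ := ε
  have key : ∀ᶠ n : ℕ in atTop,
      ((Real.log (dynPn f ψ n ε) / n : ℝ) : EReal) ≤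
        ((K / n : ℝ) : EReal) + ((Real.log (dynPn f 0 n ε) / n : ℝ) : EReal) := by
    filter_upwards [eventually_ge_atTop 1] with n hn
    have hn0 : (0 : ℝ) < n := by exact_mod_cast Nat.pos_of_ne_zero (by omega)
    have hlog : Real.log (dynPn f ψ n ε) ≤ K + Real.log (dynPn f 0 n ε) := by
      have h1 := Real.log_le_log (dynPn_pos f ψ n hε) (hdyn n ε hε)
      rwa [Real.log_mul (Real.exp_ne_zero _)
        (ne_of_gt (lt_of_lt_of_le one_pos (one_le_dynPn_zero f n hε))),
        Real.log_exp] at h1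
    rw [← EReal.coe_add]
    refine EReal.coe_le_coe_iff.2 ?_
    rw [← add_div]
    gcongr
  have h0 : Filter.atTop.limsup (fun n : ℕ => ((K / n : ℝ) : EReal)) = (0 : EReal) := by
    have : Tendsto (fun n : ℕ => ((K / n : ℝ) : EReal)) atTop (𝓝 ((0 : ℝ) : EReal)) :=
      (continuous_coe_real_ereal.tendsto 0).comp (tendsto_const_div_atTop_nhds_zero_nat K)
    simpa using this.limsup_eq
  calc Filter.atTop.limsup (fun n : ℕ => ((Real.log (dynPn f ψ n ε) / n : ℝ) : EReal))
      ≤ Filter.atTop.limsup (fun n : ℕ =>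
          ((K / n : ℝ) : EReal) + ((Real.log (dynPn f 0 n ε) / n : ℝ) : EReal)) :=
        limsup_le_limsup key
    _ ≤ Filter.atTop.limsup (fun n : ℕ => ((K / n : ℝ) : EReal)) +
          Filter.atTop.limsup (fun n : ℕ => ((Real.log (dynPn f 0 n ε) / n : ℝ) : EReal)) :=
        EReal.limsup_add_le (Or.inl (by rw [h0]; exact EReal.zero_ne_bot))
          (Or.inl (by rw [h0]; exact EReal.zero_ne_top))
    _ = Filter.atTop.limsup (fun n : ℕ => ((Real.log (dynPn f 0 n ε) / n : ℝ) : EReal)) := by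
        rw [h0, zero_add]

variable [Nonempty X] [MeasurableSpace X] [BorelSpace X]

private lemma cont_integrable (μ : ProbabilityMeasure X) {g : X → ℝ} (hg : Continuous g) :
    Integrable g (μ : Measure X) :=
  (BoundedContinuousFunction.mkOfCompact ⟨g, hg⟩).integrable _

private lemma integral_iterate (μ : ProbabilityMeasure X) {f : X → X} (hf : Continuous f)
    (hinv : (μ : Measure X).map f = (μ : Measure X)) (φ : C(X, ℝ)) (j : ℕ) :
    ∫ x, φ (f^[j] x) ∂(μ : Measure X) = ∫ x, φ x ∂(μ : Measure X) := by
  induction j with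
  | zero => simp
  | succ j ih =>
    have hgc : Continuous fun x => φ (f^[j] x) := φ.continuous.comp (hf.iterate j)
    have : ∫ x, φ (f^[j] (f x)) ∂(μ : Measure X)
        = ∫ x, φ (f^[j] x) ∂(μ : Measure X) := by
      rw [← integral_map hf.measurable.aemeasurable hgc.aestronglyMeasurable, hinv]
    rw [← ih, ← this]
    simp [Function.iterate_succ_apply]

private lemma exists_big_point (μ : ProbabilityMeasure X) {f : X → X} (hf : Continuous f)
    (hinv : (μ : Measure X).map f = (μ : Measure X)) (φ : C(X, ℝ)) (n : ℕ) :
    ∃ x : X, (n + 1) * (∫ x, φ x ∂(μ : Measure X)) ≤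
      ∑ j ∈ Finset.range (n + 1), φ (f^[j] x) := by
  set S : X → ℝ := fun x => ∑ j ∈ Finset.range (n + 1), φ (f^[j] x) with hS
  have hScont : Continuous S := by
    apply continuous_finset_sum
    intro j _
    exact φ.continuous.comp (hf.iterate j)
  obtain ⟨x₀, -, hx₀⟩ := isCompact_univ.exists_isMaxOn Set.univ_nonempty
    hScont.continuousOn
  refine ⟨x₀, ?_⟩
  have hint : ∫ x, S x ∂(μ : Measure X)
      = (n + 1) * (∫ x, φ x ∂(μ : Measure X)) := by
    show ∫ x, (∑ j ∈ Finset.range (n + 1), φ (f^[j] x)) ∂(μ : Measure X) = _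
    rw [integral_finset_sum (f := fun j x => φ (f^[j] x)) _
      (fun j _ => cont_integrable μ (φ.continuous.comp (hf.iterate j)))]
    rw [Finset.sum_congr rfl (fun j _ => integral_iterate μ hf hinv φ j)]
    simp [mul_comm]
  calc (n + 1) * (∫ x, φ x ∂(μ : Measure X)) = ∫ x, S x ∂(μ : Measure X) := hint.symm
    _ ≤ ∫ _x, S x₀ ∂(μ : Measure X) :=
        integral_mono (cont_integrable μ hScont) (integrable_const _)
          (fun y => hx₀ (Set.mem_univ y))
    _ = S x₀ := by simp

private lemma invariant_of_forall_integral (μ : ProbabilityMeasure X) {f : X → X}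
    (hf : Continuous f)
    (h : ∀ φ : C(X, ℝ), ∫ x, φ (f x) ∂(μ : Measure X) = ∫ x, φ x ∂(μ : Measure X)) :
    (μ : Measure X).map f = (μ : Measure X) := by
  haveI : IsProbabilityMeasure ((μ : Measure X).map f) :=
    Measure.isProbabilityMeasure_map hf.measurable.aemeasurable
  refine ext_of_forall_lintegral_eq_of_IsFiniteMeasure fun g => ?_
  have hm : Measurable fun x : X => ((g x : ℝ≥0) : ℝ≥0∞) :=
    measurable_coe_nnreal_ennreal.comp g.continuous.measurable
  rw [lintegral_map hm hf.measurable]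
  set G : C(X, ℝ) := ContinuousMap.mk (fun x => (g x : ℝ))
    (NNReal.continuous_coe.comp g.continuous) with hG
  have hGf : Integrable (fun x => (g (f x) : ℝ)) (μ : Measure X) :=
    cont_integrable μ ((NNReal.continuous_coe.comp g.continuous).comp hf)
  have hGi : Integrable (fun x => (g x : ℝ)) (μ : Measure X) :=
    cont_integrable μ (NNReal.continuous_coe.comp g.continuous)
  have e1 : ∫⁻ x, (g (f x) : ℝ≥0∞) ∂(μ : Measure X)
      = ENNReal.ofReal (∫ x, (g (f x) : ℝ) ∂(μ : Measure X)) := by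
    rw [ofReal_integral_eq_lintegral_ofReal hGf
      (Filter.Eventually.of_forall fun x => (g (f x)).coe_nonneg)]
    simp [ENNReal.ofReal_coe_nnreal]
  have e2 : ∫⁻ x, (g x : ℝ≥0∞) ∂(μ : Measure X)
      = ENNReal.ofReal (∫ x, (g x : ℝ) ∂(μ : Measure X)) := by
    rw [ofReal_integral_eq_lintegral_ofReal hGi
      (Filter.Eventually.of_forall fun x => (g x).coe_nonneg)]
    simp [ENNReal.ofReal_coe_nnreal]
  rw [e1, e2]
  exact congrArg ENNReal.ofReal (h G)

end aux

/-- For a continuous `f : X → X` on a compact metric space with finite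
topological entropy, a Borel probability measure `μ` is `f`-invariant if and only if
`𝔥_μ(f) ≥ 0`. -/
theorem invariant_iff_dynEnt_nonneg {X : Type*} [MetricSpace X] [CompactSpace X]
    [Nonempty X] [MeasurableSpace X] [BorelSpace X]
    (f : X → X) (hf : Continuous f) (htop : Ptop f 0 < ⊤) (μ : ProbabilityMeasure X) :
    (μ : Measure X).map f = (μ : Measure X) ↔ 0 ≤ dynEnt f μ := by
  constructor
  · intro hinv
    refine le_iInf fun φ => ?_
    have hP : ((∫ x, φ x ∂(μ : Measure X) : ℝ) : EReal) ≤ Ptop f φ :=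
      le_Ptop f φ (fun n => exists_big_point μ hf hinv φ n)
    rw [EReal.le_sub_iff_add_le (Or.inl (EReal.coe_ne_bot _)) (Or.inl (EReal.coe_ne_top _)),
      zero_add]
    exact hP
  · intro h
    apply invariant_of_forall_integral μ hf
    by_contra hc
    push_neg at hc
    obtain ⟨φ, hφ⟩ := hc
    set a : ℝ := (∫ x, φ (f x) ∂(μ : Measure X)) - (∫ x, φ x ∂(μ : Measure X)) with ha
    have ha0 : a ≠ 0 := sub_ne_zero_of_ne hφ
    have h0 : (0 : EReal) ≤ Ptop f 0 := Ptop_zero_nonneg f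
    have hbot : Ptop f 0 ≠ ⊥ := fun hb => by simp [hb] at h0
    set hr : ℝ := (Ptop f 0).toReal with hhr
    have hPr : Ptop f 0 = (hr : EReal) := (EReal.coe_toReal htop.ne hbot).symm
    set c : ℝ := (hr + 1) / a with hcr
    set ψ : C(X, ℝ) := c • (φ.comp ⟨f, hf⟩ - φ) with hψ
    have hint : ∫ x, ψ x ∂(μ : Measure X) = hr + 1 := by
      have hψx : ∀ x, ψ x = c * (φ (f x) - φ x) := by
        intro x
        simp [hψ]
      calc ∫ x, ψ x ∂(μ : Measure X)
          = ∫ x, c * (φ (f x) - φ x) ∂(μ : Measure X) := by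
            exact integral_congr_ae (Filter.Eventually.of_forall hψx)
        _ = c * ∫ x, (φ (f x) - φ x) ∂(μ : Measure X) := integral_const_mul c _
        _ = c * a := by
            have i1 : Integrable (fun x => φ (f x)) (μ : Measure X) :=
              cont_integrable μ (φ.continuous.comp hf)
            have i2 : Integrable (fun x => φ x) (μ : Measure X) :=
              cont_integrable μ φ.continuous
            rw [integral_sub i1 i2]
        _ = hr + 1 := div_mul_cancel₀ _ ha0
    have hchain : dynEnt f μ ≤ Ptop f ψ - ((hr + 1 : ℝ) : EReal) := by
      have := iInf_le (fun φ : C(X, ℝ) =>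
        (Ptop f φ - ((∫ x, φ x ∂(μ : Measure X) : ℝ) : EReal))) ψ
      rwa [hint] at this
    have h2 : Ptop f ψ - ((hr + 1 : ℝ) : EReal) ≤ Ptop f 0 - ((hr + 1 : ℝ) : EReal) :=
      EReal.sub_le_sub (Ptop_cobound_le hf c φ) le_rfl
    have h3 : Ptop f 0 - ((hr + 1 : ℝ) : EReal) = ((-1 : ℝ) : EReal) := by
      rw [hPr, ← EReal.coe_sub]
      norm_num
    have : (0 : EReal) ≤ ((-1 : ℝ) : EReal) :=
      h.trans (hchain.trans (h2.trans_eq h3))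
    have : (0 : ℝ) ≤ (-1 : ℝ) := by exact_mod_cast this
    linarith
end

section
/- Let f : X → X be a continuous map on a compact metric space X with h_top(f) < +∞ and let φ ∈ C(X). Suppose that for each t > 0 one chooses ν_t ∈ 𝒫_f(X) satisfying P_top(f, tφ) = 𝔥_{ν_t}(f) + t ∫ φ dν_t. If t_k → +∞ and ν_{t_k} converges in the weak* topology to ν_∞ ∈ 𝒫_f(X), then (a) ∫ φ dν_∞ = max_{μ ∈ 𝒫_f(X)} ∫ φ dμ and (b) lim_{k→∞} 𝔥_{ν_{t_k}}(f) = 𝔥_{ν_∞}(f). -/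
/-!
For invariant `μ`, a point `x` with `Sₙψ(x) ≥ ∫ Sₙψ dμ = (n+1) ∫ ψ dμ` is on its own an
`(n,ε)`-separated set, so `∫ ψ dμ ≤ P_top(f,ψ)`; hence `0 ≤ 𝔥_μ(f) ≤ h_top(f)`. By the
definition of `𝔥`, `𝔥_μ(f) + ∫ ψ dμ ≤ P_top(f,ψ)` for every `μ`; for `ψ = tφ`, whose
pressure equals `𝔥_{ν_t}(f) + t ∫ φ dν_t`, this gives
`t (∫ φ dμ - ∫ φ dν_t) ≤ 𝔥_{ν_t}(f) - 𝔥_μ(f) ≤ h_top(f)` for invariant `μ`. Letting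
`t → ∞` yields (a); taking `μ = ν_∞` and using (a) gives `𝔥_{ν_∞}(f) ≤ 𝔥_{ν_t}(f)`. The
reverse inequality in the limit holds because `𝔥` is an infimum of weak*-continuous functions
of the measure, hence upper semicontinuous.
-/

open MeasureTheory Filter Topology

section BirkhoffSum

variable {α E : Type*} [MeasurableSpace α] [NormedAddCommGroup E]
  {f : α → α} {μ : Measure α} {g : α → E}

theorem MeasureTheory.MeasurePreserving.integrable_birkhoffSum
    (hf : MeasurePreserving f μ μ) (hg : Integrable g μ) (n : ℕ) :
    Integrable (birkhoffSum f g n) μ :=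
  integrable_finsetSum _ fun k _ => (hf.iterate k).integrable_comp_of_integrable hg

theorem MeasureTheory.MeasurePreserving.integral_birkhoffSum [NormedSpace ℝ E]
    (hf : MeasurePreserving f μ μ) (hg : Integrable g μ) (n : ℕ) :
    ∫ x, birkhoffSum f g n x ∂μ = n • ∫ x, g x ∂μ := by
  have hcomp (k : ℕ) : ∫ x, g (f^[k] x) ∂μ = ∫ x, g x ∂μ := by
    have hmap := (hf.iterate k).map_eq
    rw [← integral_map (hf.iterate k).aemeasurable (by rw [hmap]; exact hg.aestronglyMeasurable),
      hmap]
  simp only [birkhoffSum]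
  rw [integral_finsetSum (f := fun k x => g (f^[k] x)) _
    fun k _ => (hf.iterate k).integrable_comp_of_integrable hg]
  simp [hcomp]

end BirkhoffSum

theorem EReal.continuous_sub_coe (a : EReal) : Continuous fun x : ℝ => a - (x : EReal) := by
  induction a with
  | bot => simpa using continuous_const
  | top => simpa using continuous_const
  | coe a =>
    simp only [← EReal.coe_sub]
    exact continuous_coe_real_ereal.comp (continuous_const.sub continuous_id)

section Pressure

variable {X : Type*} [MetricSpace X] [CompactSpace X]

/-- At a scale `ε` above the diameter, `(n,ε)`-separated sets have at most one point. -/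
theorem exp_birkhoffSum_le_dynPn (f : X → X) (ψ : C(X, ℝ)) (n : ℕ) {ε : ℝ}
    (hε : Metric.diam (Set.univ : Set X) < ε) (x : X) :
    Real.exp (birkhoffSum f ψ (n + 1) x) ≤ dynPn f ψ n ε := by
  have hsum (y : X) : birkhoffSum f ψ (n + 1) y ≤ (n + 1) * ‖ψ‖ := by
    calc birkhoffSum f ψ (n + 1) y ≤ ∑ _j ∈ Finset.range (n + 1), ‖ψ‖ :=
          Finset.sum_le_sum fun j _ => (le_abs_self _).trans (ψ.norm_coe_le_norm _)
      _ = (n + 1) * ‖ψ‖ := by simp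
  refine le_csSup ⟨Real.exp ((n + 1) * ‖ψ‖), ?_⟩ ⟨{x}, by simp, by simp [birkhoffSum]⟩
  rintro r ⟨F, hsep, rfl⟩
  have hF : F.card ≤ 1 := Finset.card_le_one.2 fun y hy z hz => by
    by_contra hyz
    obtain ⟨j, -, hj⟩ := hsep y hy z hz hyz
    exact hε.not_ge (hj.trans
      (Metric.dist_le_diam_of_mem isCompact_univ.isBounded trivial trivial))
  calc ∑ y ∈ F, Real.exp (∑ j ∈ Finset.range (n + 1), ψ (f^[j] y))
      ≤ F.card • Real.exp ((n + 1) * ‖ψ‖) :=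
        Finset.sum_le_card_nsmul _ _ _ fun y _ => Real.exp_le_exp.2 (hsum y)
    _ ≤ Real.exp ((n + 1) * ‖ψ‖) := by
        rw [nsmul_eq_mul]
        exact mul_le_of_le_one_left (Real.exp_pos _).le (by exact_mod_cast hF)

variable [MeasurableSpace X] [BorelSpace X]

theorem integral_le_Ptop {f : X → X} (ψ : C(X, ℝ)) {μ : ProbabilityMeasure X}
    (hμ : MeasurePreserving f μ μ) :
    ((∫ x, ψ x ∂(μ : Measure X) : ℝ) : EReal) ≤ Ptop f ψ := by
  set I := ∫ x, ψ x ∂(μ : Measure X)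
  set ε := Metric.diam (Set.univ : Set X) + 1
  have hε : 0 < ε := by positivity
  have hψ : Integrable ψ (μ : Measure X) :=
    ψ.continuous.integrable_of_hasCompactSupport (HasCompactSupport.of_compactSpace _)
  have hlog (n : ℕ) : (n + 1) * I ≤ Real.log (dynPn f ψ n ε) := by
    obtain ⟨x, hx⟩ := exists_integral_le (hμ.integrable_birkhoffSum hψ (n + 1))
    have hexp := exp_birkhoffSum_le_dynPn f ψ n (ε := ε) (by simp [ε]) x
    calc (n + 1) * I = ∫ x, birkhoffSum f ψ (n + 1) x ∂(μ : Measure X) := by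
          rw [hμ.integral_birkhoffSum hψ, nsmul_eq_mul]; push_cast; rfl
      _ ≤ birkhoffSum f ψ (n + 1) x := hx
      _ ≤ Real.log (dynPn f ψ n ε) :=
          (Real.le_log_iff_exp_le ((Real.exp_pos _).trans_le hexp)).2 hexp
  have hlim : Tendsto (fun n : ℕ => (((n + 1) * I / n : ℝ) : EReal)) atTop (𝓝 (I : EReal)) := by
    refine EReal.tendsto_coe.2 ?_
    have := tendsto_const_nhds (x := I) |>.add (tendsto_const_div_atTop_nhds_zero_nat I)
    rw [add_zero] at this
    refine this.congr' ((eventually_gt_atTop 0).mono fun n hn => ?_)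
    field_simp
  calc (I : EReal) = atTop.limsup fun n : ℕ => (((n + 1) * I / n : ℝ) : EReal) :=
        hlim.limsup_eq.symm
    _ ≤ atTop.limsup fun n : ℕ => ((Real.log (dynPn f ψ n ε) / n : ℝ) : EReal) :=
        limsup_le_limsup (.of_forall fun n => EReal.coe_le_coe_iff.2 <|
          div_le_div_of_nonneg_right (hlog n) (Nat.cast_nonneg n))
    _ ≤ Ptop f ψ := le_iSup_of_le (⟨ε, hε⟩ : { e : ℝ // 0 < e }) le_rfl

end Pressure

section Entropy

variable {X : Type*} [MetricSpace X] [MeasurableSpace X]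

theorem dynEnt_add_integral_le_Ptop (f : X → X) (μ : ProbabilityMeasure X) (ψ : C(X, ℝ)) :
    dynEnt f μ + ((∫ x, ψ x ∂(μ : Measure X) : ℝ) : EReal) ≤ Ptop f ψ :=
  (EReal.le_sub_iff_add_le (.inl (EReal.coe_ne_bot _)) (.inl (EReal.coe_ne_top _))).1
    (iInf_le _ ψ)

theorem dynEnt_le_Ptop_zero (f : X → X) (μ : ProbabilityMeasure X) :
    dynEnt f μ ≤ Ptop f 0 := by
  simpa using dynEnt_add_integral_le_Ptop f μ 0

theorem dynEnt_nonneg [CompactSpace X] [BorelSpace X] {f : X → X} {μ : ProbabilityMeasure X}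
    (hμ : MeasurePreserving f μ μ) : 0 ≤ dynEnt f μ :=
  le_iInf fun ψ => (EReal.le_sub_iff_add_le (.inl (EReal.coe_ne_bot _))
    (.inl (EReal.coe_ne_top _))).2 (by simpa using integral_le_Ptop ψ hμ)

theorem upperSemicontinuous_dynEnt [CompactSpace X] [OpensMeasurableSpace X] (f : X → X) :
    UpperSemicontinuous (dynEnt f) :=
  upperSemicontinuous_iInf fun ψ => ((EReal.continuous_sub_coe _).comp
    (ProbabilityMeasure.continuous_integral_continuousMap ψ)).upperSemicontinuous

def IsEquilibriumState (f : X → X) (ψ : C(X, ℝ)) (ν : ProbabilityMeasure X) : Prop :=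
  Ptop f ψ = dynEnt f ν + ((∫ x, ψ x ∂(ν : Measure X) : ℝ) : EReal)

variable {f : X → X} {ν : ProbabilityMeasure X}

theorem IsEquilibriumState.dynEnt_add_integral_le {ψ : C(X, ℝ)}
    (hν : IsEquilibriumState f ψ ν) (μ : ProbabilityMeasure X) :
    dynEnt f μ + ((∫ x, ψ x ∂(μ : Measure X) : ℝ) : EReal)
      ≤ dynEnt f ν + ((∫ x, ψ x ∂(ν : Measure X) : ℝ) : EReal) :=
  hν ▸ dynEnt_add_integral_le_Ptop f μ ψ

theorem integral_smul_continuousMap (μ : Measure X) (t : ℝ) (φ : C(X, ℝ)) :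
    ∫ x, (t • φ) x ∂μ = t * ∫ x, φ x ∂μ := by
  simp only [ContinuousMap.coe_smul, Pi.smul_apply, smul_eq_mul, integral_const_mul]

variable {φ : C(X, ℝ)} {t : ℝ}

theorem IsEquilibriumState.integral_le_add_div [CompactSpace X] [BorelSpace X]
    (hν : IsEquilibriumState f (t • φ) ν) (ht : 0 < t) {μ : ProbabilityMeasure X}
    (hμ : MeasurePreserving f μ μ) {h : ℝ} (hh : Ptop f 0 ≤ h) :
    ∫ x, φ x ∂(μ : Measure X) ≤ ∫ x, φ x ∂(ν : Measure X) + h / t := by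
  have key := hν.dynEnt_add_integral_le μ
  rw [integral_smul_continuousMap, integral_smul_continuousMap] at key
  have : ((t * ∫ x, φ x ∂(μ : Measure X) : ℝ) : EReal)
      ≤ ((h + t * ∫ x, φ x ∂(ν : Measure X) : ℝ) : EReal) :=
    calc _ ≤ dynEnt f μ + ((t * ∫ x, φ x ∂(μ : Measure X) : ℝ) : EReal) :=
          le_add_of_nonneg_left (dynEnt_nonneg hμ)
      _ ≤ _ := key
      _ ≤ (h : EReal) + ((t * ∫ x, φ x ∂(ν : Measure X) : ℝ) : EReal) :=
          add_le_add_left ((dynEnt_le_Ptop_zero f ν).trans hh) _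
  rw [← sub_le_iff_le_add', le_div_iff₀ ht]
  linarith [EReal.coe_le_coe_iff.1 this]

theorem IsEquilibriumState.dynEnt_le_of_integral_le (hν : IsEquilibriumState f (t • φ) ν)
    (ht : 0 < t) {μ : ProbabilityMeasure X}
    (hφ : ∫ x, φ x ∂(ν : Measure X) ≤ ∫ x, φ x ∂(μ : Measure X)) :
    dynEnt f μ ≤ dynEnt f ν := by
  have key := hν.dynEnt_add_integral_le μ
  rw [integral_smul_continuousMap, integral_smul_continuousMap] at key
  refine (EReal.addLECancellable_coe _).add_le_add_iff_right.1 (key.trans ?_)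
  exact add_le_add_right (EReal.coe_le_coe_iff.2 (mul_le_mul_of_nonneg_left hφ ht.le)) _

end Entropy

theorem zero_temperature_accumulation_general {X : Type*} [MetricSpace X] [CompactSpace X]
    [MeasurableSpace X] [BorelSpace X]
    (f : X → X) (hf : Continuous f) (htop : Ptop f 0 < ⊤) (φ : C(X, ℝ))
    (ν : ℝ → ProbabilityMeasure X)
    (hinv : ∀ t : ℝ, 0 < t → ((ν t : Measure X)).map f = (ν t : Measure X))
    (heq : ∀ t : ℝ, 0 < t →
      Ptop f (t • φ) = dynEnt f (ν t)
        + ((t * ∫ x, φ x ∂(ν t : Measure X) : ℝ) : EReal))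
    (ts : ℕ → ℝ) (hts : Tendsto ts atTop atTop)
    (νlim : ProbabilityMeasure X)
    (hconv : Tendsto (fun k : ℕ => ν (ts k)) atTop (𝓝 νlim)) :
    (∀ μ : ProbabilityMeasure X, (μ : Measure X).map f = (μ : Measure X) →
        ∫ x, φ x ∂(μ : Measure X) ≤ ∫ x, φ x ∂(νlim : Measure X)) ∧
    Tendsto (fun k : ℕ => dynEnt f (ν (ts k))) atTop (𝓝 (dynEnt f νlim)) := by
  have hequil (t : ℝ) (ht : 0 < t) : IsEquilibriumState f (t • φ) (ν t) := by
    rw [IsEquilibriumState, integral_smul_continuousMap]; exact heq t ht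
  have hpos : ∀ᶠ k in atTop, 0 < ts k := hts.eventually_gt_atTop 0
  have hint : Tendsto (fun k => ∫ x, φ x ∂(ν (ts k) : Measure X)) atTop
      (𝓝 (∫ x, φ x ∂(νlim : Measure X))) :=
    (ProbabilityMeasure.continuous_integral_continuousMap φ).continuousAt.tendsto.comp hconv
  have ha (μ : ProbabilityMeasure X) (hμ : (μ : Measure X).map f = (μ : Measure X)) :
      ∫ x, φ x ∂(μ : Measure X) ≤ ∫ x, φ x ∂(νlim : Measure X) :=
    ge_of_tendsto (by simpa using hint.add (tendsto_const_nhds.div_atTop hts)) <|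
      hpos.mono fun k hk => (hequil _ hk).integral_le_add_div hk ⟨hf.measurable, hμ⟩
        (EReal.le_coe_toReal htop.ne)
  have hlow : ∀ᶠ k in atTop, dynEnt f νlim ≤ dynEnt f (ν (ts k)) :=
    hpos.mono fun k hk => (hequil _ hk).dynEnt_le_of_integral_le hk (ha _ (hinv _ hk))
  exact ⟨ha, tendsto_order.2 ⟨fun a ha' => hlow.mono fun k hk => ha'.trans_le hk,
    fun b hb => hconv.eventually (upperSemicontinuous_dynEnt f νlim b hb)⟩⟩

/-- Let `f` be continuous with finite topological entropy, `φ ∈ C(X)`,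
and for each `t > 0` let `ν_t` be an `f`-invariant equilibrium state for `tφ`
(`P_top(f,tφ) = 𝔥_{ν_t}(f) + t ∫ φ dν_t`). If `t_k → +∞` and `ν_{t_k} → ν_∞` weakly*
with `ν_∞` `f`-invariant, then (a) `∫ φ dν_∞ = max_{μ ∈ 𝒫_f(X)} ∫ φ dμ` and
(b) `𝔥_{ν_{t_k}}(f) → 𝔥_{ν_∞}(f)`. -/
theorem zero_temperature_accumulation {X : Type*} [MetricSpace X] [CompactSpace X]
    [Nonempty X] [MeasurableSpace X] [BorelSpace X]
    (f : X → X) (hf : Continuous f) (htop : Ptop f 0 < ⊤) (φ : C(X, ℝ))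
    (ν : ℝ → ProbabilityMeasure X)
    (hinv : ∀ t : ℝ, 0 < t → ((ν t : Measure X)).map f = (ν t : Measure X))
    (heq : ∀ t : ℝ, 0 < t →
      Ptop f (t • φ) = dynEnt f (ν t)
        + ((t * ∫ x, φ x ∂(ν t : Measure X) : ℝ) : EReal))
    (ts : ℕ → ℝ) (hts : Tendsto ts atTop atTop)
    (νlim : ProbabilityMeasure X)
    (hνliminv : ((νlim : Measure X)).map f = (νlim : Measure X))
    (hconv : Tendsto (fun k : ℕ => ν (ts k)) atTop (𝓝 νlim)) :
    (∀ μ : ProbabilityMeasure X, (μ : Measure X).map f = (μ : Measure X) →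
        ∫ x, φ x ∂(μ : Measure X) ≤ ∫ x, φ x ∂(νlim : Measure X)) ∧
    Tendsto (fun k : ℕ => dynEnt f (ν (ts k))) atTop (𝓝 (dynEnt f νlim)) :=
  zero_temperature_accumulation_general f hf htop φ ν hinv heq ts hts νlim hconv
end
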